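/- Let n ≥ 3, n < q < ∞, 0 < λ ≤ Λ, Λ̃ ≥ 1, and let a : B_r(x₀) × ℝⁿ → ℝⁿ satisfy the structure conditions with exponent p = 2 and modulus ω. Set a₀(ξ) := a(x₀, ξ). Let f ∈ L^q(B_r(x₀)), let u be a C¹ weak solution of -div a(x,∇u) = f in B_r(x₀) and h a C¹ weak solution of -div a₀(∇h) = 0 in B_r(x₀), both with gradients in L²(B_r(x₀)). Assume v := u - h is an admissible test function, i.e., there exist smooth φ_k compactly supported in B_r(x₀) with φ_k → v and ∇φ_k → ∇v in L²(B_r(x₀)). Then there is a constant C > 0 depending only on n, q, λ, Λ, Λ̃ such that ∫_{B_r(x₀)} |∇u - ∇h|² dx ≤ C ( ω(r)² ∫_{B_r(x₀)} |∇u|² dx + ‖f‖²_{L^q(B_r(x₀))} · r^{n + 2(1 - n/q)} ). -/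

import Mathlib

open MeasureTheory Metric Real Set
open scoped RealInnerProductSpace ENNReal NNReal Topology

noncomputable section
open Filter
set_option linter.unusedSectionVars false
set_option maxHeartbeats 1000000

abbrev En (n : ℕ) := EuclideanSpace ℝ (Fin n)

section Helpers

variable {α : Type*} [MeasurableSpace α] {μ : Measure α}
variable {E : Type*} [NormedAddCommGroup E] [InnerProductSpace ℝ E] [CompleteSpace E]

lemma l2_integrable_inner {g w : α → E} (hg : MemLp g 2 μ) (hw : MemLp w 2 μ) :
    Integrable (fun x => ⟪g x, w x⟫) μ := by
  have h := MeasureTheory.L2.integrable_inner (𝕜 := ℝ) (hg.toLp g) (hw.toLp w)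
  refine h.congr ?_
  filter_upwards [hg.coeFn_toLp, hw.coeFn_toLp] with x h1 h2
  rw [h1, h2]

lemma l2_integrable_norm_mul_norm {g w : α → E} (hg : MemLp g 2 μ) (hw : MemLp w 2 μ) :
    Integrable (fun x => ‖g x‖ * ‖w x‖) μ := by
  have h := l2_integrable_inner (μ := μ) (E := ℝ) hg.norm hw.norm
  simpa [RCLike.inner_apply, mul_comm] using h

lemma l2_CS_norm {g w : α → E} (hg : MemLp g 2 μ) (hw : MemLp w 2 μ) :
    ∫ x, ‖g x‖ * ‖w x‖ ∂μ ≤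
      (∫ x, ‖g x‖ ^ 2 ∂μ) ^ (1/2:ℝ) * (∫ x, ‖w x‖ ^ 2 ∂μ) ^ (1/2:ℝ) := by
  have h2 : Real.HolderConjugate 2 2 := Real.holderConjugate_iff.mpr ⟨one_lt_two, by norm_num⟩
  have hg2 : MemLp g (ENNReal.ofReal (2:ℝ)) μ := by
    simpa [ENNReal.ofReal_ofNat] using hg
  have hw2 : MemLp w (ENNReal.ofReal (2:ℝ)) μ := by
    simpa [ENNReal.ofReal_ofNat] using hw
  have h := integral_mul_norm_le_Lp_mul_Lq (μ := μ) h2 hg2 hw2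
  simpa [Real.rpow_two] using h

lemma l2_CS_inner {g w : α → E} (hg : MemLp g 2 μ) (hw : MemLp w 2 μ) :
    |∫ x, ⟪g x, w x⟫ ∂μ| ≤
      (∫ x, ‖g x‖ ^ 2 ∂μ) ^ (1/2:ℝ) * (∫ x, ‖w x‖ ^ 2 ∂μ) ^ (1/2:ℝ) := by
  refine le_trans ?_ (l2_CS_norm hg hw)
  calc |∫ x, ⟪g x, w x⟫ ∂μ| ≤ ∫ x, ‖⟪g x, w x⟫‖ ∂μ := by
        simpa using norm_integral_le_integral_norm (fun x => ⟪g x, w x⟫)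
    _ ≤ ∫ x, ‖g x‖ * ‖w x‖ ∂μ := by
        refine integral_mono (l2_integrable_inner hg hw).norm
          (l2_integrable_norm_mul_norm hg hw) ?_
        intro x
        exact (abs_real_inner_le_norm _ _)

lemma l2norm_toReal {w : α → E} (hw : MemLp w 2 μ) :
    (eLpNorm w 2 μ).toReal = (∫ x, ‖w x‖ ^ 2 ∂μ) ^ (1/2:ℝ) := by
  rw [hw.eLpNorm_eq_integral_rpow_norm two_ne_zero ENNReal.ofNat_ne_top]
  rw [ENNReal.toReal_ofReal (by positivity)]
  norm_num [Real.rpow_two]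

end Helpers
lemma exists_unit_orthogonal {n : ℕ} (hn : 2 ≤ n) (v : En n) :
    ∃ e : En n, ‖e‖ = 1 ∧ ⟪v, e⟫ = 0 := by
  have hfr : Module.finrank ℝ (En n) = n := finrank_euclideanSpace_fin
  have hinst : Nonempty (Fin n) := ⟨⟨0, by omega⟩⟩
  by_cases hv : v = 0
  · refine ⟨EuclideanSpace.single (Classical.arbitrary (Fin n)) (1:ℝ), ?_, ?_⟩
    · simp [EuclideanSpace.norm_single]
    · simp [hv]
  · have hlt : (ℝ ∙ v) < ⊤ := by
      refine Submodule.lt_top_of_finrank_lt_finrank ?_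
      rw [finrank_span_singleton hv, hfr]; omega
    have hbot : (ℝ ∙ v)ᗮ ≠ ⊥ := by
      rw [Ne, Submodule.orthogonal_eq_bot_iff]
      exact hlt.ne
    obtain ⟨e', he'mem, he'ne⟩ := Submodule.exists_mem_ne_zero_of_ne_bot hbot
    refine ⟨‖e'‖⁻¹ • e', ?_, ?_⟩
    · rw [norm_smul, norm_inv, norm_norm, inv_mul_cancel₀ (norm_ne_zero_iff.mpr he'ne)]
    · rw [real_inner_smul_right]
      have h0 := (Submodule.mem_orthogonal _ e').mp he'mem v (Submodule.mem_span_singleton_self v)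
      rw [h0, mul_zero]

lemma norm_smul_add_smul_sq {n : ℕ} {d e : En n} (hd : ‖d‖ = 1) (he : ‖e‖ = 1)
    (hde : ⟪d, e⟫ = 0) (s t : ℝ) : ‖s • d + t • e‖ ^ 2 = s ^ 2 + t ^ 2 := by
  rw [norm_add_sq_real, norm_smul, norm_smul, real_inner_smul_left, real_inner_smul_right, hde]
  simp [hd, he, mul_pow, sq_abs]

lemma freezing {n : ℕ} (hn : 2 ≤ n) {r tLam : ℝ} (hr : 0 < r) (htLam : 0 ≤ tLam)
    {x₀ : En n} {a : En n → En n → En n} {ω : ℝ → ℝ} (hω : ∀ t, 0 ≤ ω t)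
    (hcont : ContinuousOn (fun z : En n × En n => a z.1 z.2) ((ball x₀ r) ×ˢ univ))
    (hosc : ∀ x₁ ∈ ball x₀ r, ∀ x₂ ∈ ball x₀ r, ∀ ξ : En n,
      ‖a x₁ ξ - a x₂ ξ‖ ≤ tLam * ω ‖x₁ - x₂‖ * ‖ξ‖ ^ ((2:ℝ) - 1)) :
    ∀ x ∈ ball x₀ r, ∀ ξ : En n, ‖a x ξ - a x₀ ξ‖ ≤ 2 * (tLam * ω r) * ‖ξ‖ := by
  intro x hx ξ
  by_cases hxx : x = x₀
  · simp only [hxx, sub_self, norm_zero]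
    exact mul_nonneg (mul_nonneg (by norm_num) (mul_nonneg htLam (hω r))) (norm_nonneg ξ)
  set t := ‖x - x₀‖ with ht
  have ht0 : 0 < t := by
    rw [ht, norm_pos_iff]
    exact sub_ne_zero.mpr hxx
  have htr : t < r := by
    rw [ht, ← dist_eq_norm]
    exact mem_ball.mp hx
  set d : En n := t⁻¹ • (x - x₀) with hdd
  have hd : ‖d‖ = 1 := by
    rw [hdd, norm_smul, norm_inv, norm_norm, ← ht, inv_mul_cancel₀ ht0.ne']
  have hxd : x - x₀ = t • d := by
    rw [hdd, smul_smul, mul_inv_cancel₀ ht0.ne', one_smul]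
  obtain ⟨e, he1, hde⟩ := exists_unit_orthogonal hn d
  -- key: for each small ε there is y at distance ε from x₀ with the 2-hop bound
  have key : ∀ ε : ℝ, 0 < ε → ε ≤ t → ∃ y : En n, ‖y - x₀‖ = ε ∧ y ∈ ball x₀ r ∧
      ‖a x ξ - a y ξ‖ ≤ 2 * (tLam * ω r) * ‖ξ‖ := by
    intro ε hε0 hεt
    have hεr : ε < r := lt_of_le_of_lt hεt htr
    have hrε : 0 < r - ε := by linarith
    set α : ℝ := (t^2 - 2*r*ε + ε^2)/(2*t) with hα
    have hβsq : (0:ℝ) ≤ (r-ε)^2 - α^2 := by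
      have hfac : (r-ε)^2 - α^2 =
          ((t+ε)*(2*r - t - ε)/(2*t)) * ((t-ε)*(t-ε+2*r)/(2*t)) := by
        rw [hα]; field_simp; ring
      rw [hfac]
      have h1 : (0:ℝ) ≤ (t+ε)*(2*r - t - ε)/(2*t) := by
        apply div_nonneg
        · nlinarith
        · linarith
      have h2 : (0:ℝ) ≤ (t-ε)*(t-ε+2*r)/(2*t) := by
        apply div_nonneg
        · nlinarith
        · linarith
      exact mul_nonneg h1 h2
    set β : ℝ := Real.sqrt ((r-ε)^2 - α^2) with hβ
    have hβ2 : β^2 = (r-ε)^2 - α^2 := Real.sq_sqrt hβsq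
    set wv : En n := α • d + β • e with hwv
    have hwvn2 : ‖wv‖^2 = (r-ε)^2 := by
      rw [hwv, norm_smul_add_smul_sq hd he1 hde, hβ2]; ring
    have hwvn : ‖wv‖ = r - ε := by
      rw [← Real.sqrt_sq (norm_nonneg wv), hwvn2, Real.sqrt_sq hrε.le]
    set w : En n := x₀ + wv with hw
    have hwball : w ∈ ball x₀ r := by
      rw [mem_ball, dist_eq_norm, hw, add_sub_cancel_left, hwvn]
      linarith
    have hxw : ‖x - w‖ = r := by
      have hxwv : x - w = (t - α) • d + (-β) • e := by
        rw [hw, hwv]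
        rw [show x - (x₀ + (α • d + β • e)) = (x - x₀) - α • d - β • e by abel, hxd]
        rw [← sub_smul, neg_smul]
        abel
      have h2 : ‖x - w‖^2 = r^2 := by
        rw [hxwv, norm_smul_add_smul_sq hd he1 hde]
        have : (t - α)^2 + (-β)^2 = t^2 - 2*α*t + α^2 + β^2 := by ring
        rw [this, hβ2, hα]
        field_simp
        ring
      rw [← Real.sqrt_sq (norm_nonneg _), h2, Real.sqrt_sq hr.le]
    set y : En n := x₀ - (ε/(r-ε)) • wv with hy
    have hyx₀ : ‖y - x₀‖ = ε := by
      rw [hy]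
      rw [show x₀ - (ε/(r-ε)) • wv - x₀ = -((ε/(r-ε)) • wv) by abel]
      rw [norm_neg, norm_smul, hwvn, Real.norm_eq_abs, abs_of_pos (by positivity)]
      field_simp
    have hyball : y ∈ ball x₀ r := by
      rw [mem_ball, dist_eq_norm, hyx₀]
      exact hεr
    have hwy : ‖w - y‖ = r := by
      have : w - y = (1 + ε/(r-ε)) • wv := by
        rw [hw, hy, add_smul, one_smul]
        abel
      rw [this, norm_smul, hwvn, Real.norm_eq_abs, abs_of_pos (by positivity)]
      field_simp
      ring
    refine ⟨y, hyx₀, hyball, ?_⟩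
    have hb1 := hosc x hx w hwball ξ
    have hb2 := hosc w hwball y hyball ξ
    have hrpow : ‖ξ‖ ^ ((2:ℝ) - 1) = ‖ξ‖ := by
      norm_num
    rw [hrpow] at hb1 hb2
    rw [hxw] at hb1
    rw [hwy] at hb2
    calc ‖a x ξ - a y ξ‖ ≤ ‖a x ξ - a w ξ‖ + ‖a w ξ - a y ξ‖ := by
          rw [show a x ξ - a y ξ = (a x ξ - a w ξ) + (a w ξ - a y ξ) by abel]
          exact norm_add_le _ _
      _ ≤ tLam * ω r * ‖ξ‖ + tLam * ω r * ‖ξ‖ := add_le_add hb1 hb2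
      _ = 2 * (tLam * ω r) * ‖ξ‖ := by ring
  -- take the limit ε → 0
  set εs : ℕ → ℝ := fun k => t / (k + 2) with hεs
  have hεs0 : ∀ k, 0 < εs k := fun k => by
    apply div_pos ht0; positivity
  have hεst : ∀ k, εs k ≤ t := fun k => by
    rw [hεs]
    rw [div_le_iff₀ (by positivity)]
    nlinarith [ht0.le]
  have hεslim : Tendsto εs atTop (𝓝 0) := by
    apply Tendsto.div_atTop tendsto_const_nhds
    apply tendsto_atTop_add_const_right
    exact tendsto_natCast_atTop_atTop
  choose y hy1 hy2 hy3 using fun k => key (εs k) (hεs0 k) (hεst k)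
  have hylim : Tendsto y atTop (𝓝 x₀) := by
    rw [tendsto_iff_dist_tendsto_zero]
    simpa only [dist_eq_norm, hy1] using hεslim
  have hca : ContinuousAt (fun z : En n => a z ξ) x₀ := by
    have hopen : IsOpen ((ball x₀ r) ×ˢ (univ : Set (En n))) :=
      isOpen_ball.prod isOpen_univ
    have h1 : ContinuousAt (fun z : En n × En n => a z.1 z.2) (x₀, ξ) :=
      hcont.continuousAt (hopen.mem_nhds (by simp [mem_ball_self hr]))
    have h2 : Continuous (fun z : En n => (z, ξ)) := continuous_id.prodMk continuous_const
    exact ContinuousAt.comp (f := fun z : En n => (z, ξ)) h1 h2.continuousAt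
  have halim : Tendsto (fun k => ‖a x ξ - a (y k) ξ‖) atTop (𝓝 ‖a x ξ - a x₀ ξ‖) := by
    have := (hca.tendsto.comp hylim)
    exact ((tendsto_const_nhds.sub this).norm)
  exact le_of_tendsto halim (Eventually.of_forall hy3)
lemma mono_step {n : ℕ} {lam : ℝ} {a₀ : En n → En n} {Da₀ : En n → (En n →L[ℝ] En n)}
    (hd : ∀ ξ : En n, HasFDerivAt a₀ (Da₀ ξ) ξ)
    (hm : ∀ ξ₁ ξ₂ : En n, lam * ‖ξ₁‖ ^ ((2:ℝ) - 2) * ‖ξ₂‖ ^ (2:ℝ) ≤ ⟪Da₀ ξ₁ ξ₂, ξ₂⟫) :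
    ∀ ξ₁ ξ₂ : En n, lam * ‖ξ₁ - ξ₂‖ ^ 2 ≤ ⟪a₀ ξ₁ - a₀ ξ₂, ξ₁ - ξ₂⟫ := by
  intro ξ₁ ξ₂
  set dv : En n := ξ₁ - ξ₂ with hdv
  have hm' : ∀ ξ : En n, lam * ‖dv‖ ^ 2 ≤ ⟪Da₀ ξ dv, dv⟫ := by
    intro ξ
    have h := hm ξ dv
    rw [show (2:ℝ) - 2 = 0 by norm_num, Real.rpow_zero, Real.rpow_two] at h
    linarith
  set g : ℝ → ℝ := fun s => ⟪dv, a₀ (ξ₂ + s • dv)⟫ - s * (lam * ‖dv‖ ^ 2) with hgdef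
  have hg : ∀ s : ℝ, HasDerivAt g (⟪dv, Da₀ (ξ₂ + s • dv) dv⟫ - lam * ‖dv‖ ^ 2) s := by
    intro s
    have hc : HasDerivAt (fun s : ℝ => ξ₂ + s • dv) dv s := by
      simpa using ((hasDerivAt_id s).smul_const dv).const_add ξ₂
    have h1 : HasDerivAt (fun s : ℝ => a₀ (ξ₂ + s • dv)) (Da₀ (ξ₂ + s • dv) dv) s :=
      (hd _).comp_hasDerivAt s hc
    have h2 : HasDerivAt (fun s : ℝ => ⟪dv, a₀ (ξ₂ + s • dv)⟫)
        ((innerSL ℝ dv) (Da₀ (ξ₂ + s • dv) dv)) s :=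
      (innerSL ℝ dv).hasFDerivAt.comp_hasDerivAt s h1
    have h3 : HasDerivAt (fun s : ℝ => ⟪dv, a₀ (ξ₂ + s • dv)⟫) ⟪dv, Da₀ (ξ₂ + s • dv) dv⟫ s := by
      simpa using h2
    exact h3.sub (hasDerivAt_mul_const (lam * ‖dv‖ ^ 2))
  have hmono : Monotone g := by
    have hdiff : Differentiable ℝ g := fun s => (hg s).differentiableAt
    apply monotone_of_deriv_nonneg hdiff
    intro s
    rw [(hg s).deriv]
    have := hm' (ξ₂ + s • dv)
    rw [real_inner_comm] at this
    linarith
  have h01 := hmono (le_of_lt one_pos)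
  rw [hgdef] at h01
  simp only [zero_smul, add_zero, one_smul, zero_mul, sub_zero, one_mul] at h01
  have hx1 : ξ₂ + dv = ξ₁ := by rw [hdv]; abel
  rw [hx1] at h01
  have : ⟪a₀ ξ₁ - a₀ ξ₂, dv⟫ = ⟪dv, a₀ ξ₁⟫ - ⟪dv, a₀ ξ₂⟫ := by
    rw [inner_sub_left, real_inner_comm (a₀ ξ₁) dv, real_inner_comm (a₀ ξ₂) dv]
  rw [this]
  linarith
lemma poincare {n : ℕ} (hn : 3 ≤ n) {q : ℝ} (hq : (n:ℝ) < q) :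
    ∃ c₀ : ℝ, 0 < c₀ ∧ ∀ (r : ℝ), 0 < r → ∀ (x₀ : En n) (f φ : En n → ℝ),
      MemLp f (ENNReal.ofReal q) (volume.restrict (ball x₀ r)) →
      ContDiff ℝ (⊤ : ℕ∞) φ → HasCompactSupport φ → tsupport φ ⊆ ball x₀ r →
      ∫ x in ball x₀ r, f x * φ x ≤
        c₀ * ((eLpNorm f (ENNReal.ofReal q) (volume.restrict (ball x₀ r))).toReal
          * r ^ ((n:ℝ)/2 + 1 - (n:ℝ)/q))
          * (eLpNorm (gradient φ) 2 (volume.restrict (ball x₀ r))).toReal := by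
  have hn3 : (3:ℝ) ≤ (n:ℝ) := by exact_mod_cast hn
  have hq0 : 0 < q := by linarith
  set P : ℝ := 2*(n:ℝ)/((n:ℝ)-2) with hPdef
  set s : ℝ := 2*(n:ℝ)/((n:ℝ)+2) with hsdef
  have hP0 : 0 < P := by apply div_pos <;> linarith
  have hs0 : 0 < s := by apply div_pos <;> linarith
  have hs1 : 1 < s := by rw [hsdef, lt_div_iff₀ (by linarith)]; linarith
  have hconj : Real.HolderConjugate s P := by
    rw [Real.holderConjugate_iff]
    constructor
    · exact hs1
    · rw [hsdef, hPdef]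
      rw [inv_div, inv_div]
      field_simp
      ring
  have hsq : s ≤ q := by
    rw [hsdef, div_le_iff₀ (by linarith)]
    nlinarith
  set θ : ℝ := 1/s - 1/q with hθdef
  have hθ0 : 0 < θ := by
    rw [hθdef]
    have hs2 : s < 2 := by rw [hsdef, div_lt_iff₀ (by linarith)]; linarith
    have h1 : 1/q < 1/s := by
      apply one_div_lt_one_div_of_lt hs0
      linarith
    linarith
  set Vtop : ℝ≥0∞ := volume (ball (0:En n) 1) with hVdef
  set Vθ : ℝ := Vtop.toReal ^ θ with hVθdef
  have hVθ0 : 0 ≤ Vθ := by positivity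
  set csob : ℝ≥0 := eLpNormLESNormFDerivOfEqInnerConst (volume : Measure (En n)) 2 with hcsob
  refine ⟨((csob:ℝ) + 1) * (Vθ + 1), by positivity, ?_⟩
  intro r hr x₀ f φ hf hφ hφc hφsupp
  set B : Set (En n) := ball x₀ r with hBdef
  set μB := volume.restrict B with hμB
  haveI : IsFiniteMeasure μB := ⟨by
    rw [hμB, Measure.restrict_apply_univ]
    exact measure_ball_lt_top⟩
  have hφ1 : ContDiff ℝ 1 φ := hφ.of_le (by simp)
  have hnd : Nontrivial (En n) := by
    refine ⟨EuclideanSpace.single ⟨0, by omega⟩ (1:ℝ), 0, ?_⟩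
    intro hcon
    have : ‖EuclideanSpace.single (⟨0, by omega⟩ : Fin n) (1:ℝ)‖ = 0 := by rw [hcon, norm_zero]
    rw [EuclideanSpace.norm_single] at this
    norm_num at this
  -- Sobolev inequality
  have hfrank : Module.finrank ℝ (En n) = n := finrank_euclideanSpace_fin
  have hfr0 : 0 < Module.finrank ℝ (En n) := by omega
  set p' : ℝ≥0 := P.toNNReal with hp'def
  have hp'c : (p' : ℝ) = P := Real.coe_toNNReal _ hP0.le
  have hp'inv : ((p' : ℝ))⁻¹ = ((2:ℝ≥0):ℝ)⁻¹ - ((Module.finrank ℝ (En n) : ℝ))⁻¹ := by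
    rw [hp'c, hfrank, hPdef]
    rw [inv_div]
    push_cast
    field_simp
  have hsob := eLpNorm_le_eLpNorm_fderiv_of_eq_inner (volume : Measure (En n))
    hφ1 hφc one_le_two hfr0 hp'inv
  -- identifications of eLpNorms
  have hsupp' : Function.support φ ⊆ B := (subset_tsupport φ).trans hφsupp
  have hgradsupp : Function.support (fderiv ℝ φ) ⊆ B :=
    (support_fderiv_subset ℝ).trans hφsupp
  have hE1 : eLpNorm φ (ENNReal.ofReal P) μB = eLpNorm φ ((p' : ℝ≥0∞)) volume := by
    rw [hμB, eLpNorm_restrict_eq_of_support_subset hsupp']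
    rfl
  have hE2 : eLpNorm (fderiv ℝ φ) 2 volume = eLpNorm (fderiv ℝ φ) 2 μB := by
    rw [hμB, eLpNorm_restrict_eq_of_support_subset (f := fderiv ℝ φ) (by exact hgradsupp)]
  have hgradnorm : ∀ x : En n, ‖fderiv ℝ φ x‖ = ‖gradient φ x‖ := by
    intro x
    exact ((InnerProductSpace.toDual ℝ (En n)).symm.norm_map (fderiv ℝ φ x)).symm
  have hE3 : eLpNorm (fderiv ℝ φ) 2 μB = eLpNorm (gradient φ) 2 μB :=
    eLpNorm_congr_norm_ae (Eventually.of_forall hgradnorm)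
  have hgradcont : Continuous (gradient φ) := by
    have h1 : Continuous (fderiv ℝ φ) := (hφ.fderiv_right (m := (⊤ : ℕ∞)) le_rfl).continuous
    exact (InnerProductSpace.toDual ℝ (En n)).symm.continuous.comp h1
  have hgradHCS : HasCompactSupport (gradient φ) := by
    have h1 : HasCompactSupport (fderiv ℝ φ) := HasCompactSupport.fderiv (𝕜 := ℝ) hφc
    apply HasCompactSupport.comp_left h1
    simp
  have hgradL2 : MemLp (gradient φ) 2 μB :=
    (hgradcont.memLp_of_hasCompactSupport (p := 2) hgradHCS).restrict B
  have hgradfin : eLpNorm (gradient φ) 2 μB ≠ ⊤ := hgradL2.eLpNorm_ne_top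
  -- chain in ℝ≥0∞
  have hchain : eLpNorm φ (ENNReal.ofReal P) μB ≤ (csob : ℝ≥0∞) * eLpNorm (gradient φ) 2 μB := by
    rw [hE1]
    calc eLpNorm φ ((p' : ℝ≥0∞)) volume
        ≤ (csob : ℝ≥0∞) * eLpNorm (fderiv ℝ φ) 2 volume := hsob
      _ = (csob : ℝ≥0∞) * eLpNorm (gradient φ) 2 μB := by rw [hE2, hE3]
  -- MemLp facts
  have hfs : MemLp f (ENNReal.ofReal s) μB := by
    rw [hμB] at hf ⊢
    exact hf.mono_exponent (ENNReal.ofReal_le_ofReal hsq)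
  have hφP : MemLp φ (ENNReal.ofReal P) μB :=
    (hφ1.continuous.memLp_of_hasCompactSupport (p := ENNReal.ofReal P) hφc).restrict B
  -- Hölder
  have hH : ∫ x in B, f x * φ x ≤
      (∫ x in B, ‖f x‖ ^ s ∂volume) ^ (1/s) * (∫ x in B, ‖φ x‖ ^ P ∂volume) ^ (1/P) := by
    calc ∫ x in B, f x * φ x ≤ |∫ x in B, f x * φ x| := le_abs_self _
      _ ≤ ∫ x in B, ‖f x * φ x‖ ∂volume := by
          simpa [Real.norm_eq_abs] using
            norm_integral_le_integral_norm (μ := μB) (fun x => f x * φ x)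
      _ = ∫ x in B, ‖f x‖ * ‖φ x‖ ∂volume := by
          apply integral_congr_ae
          filter_upwards with x
          exact norm_mul _ _
      _ ≤ _ := integral_mul_norm_le_Lp_mul_Lq hconj hfs hφP
  -- convert the φ factor
  have hintP0 : 0 ≤ ∫ x in B, ‖φ x‖ ^ P ∂volume := by
    apply integral_nonneg
    intro x
    positivity
  have hH3 : (∫ x in B, ‖φ x‖ ^ P ∂volume) ^ (1/P) = (eLpNorm φ (ENNReal.ofReal P) μB).toReal := by
    rw [hφP.eLpNorm_eq_integral_rpow_norm (by simp [ENNReal.ofReal_eq_zero]; linarith)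
      ENNReal.ofReal_ne_top]
    rw [ENNReal.toReal_ofReal hP0.le]
    rw [ENNReal.toReal_ofReal (by positivity)]
    rw [one_div]
  have hints0 : 0 ≤ ∫ x in B, ‖f x‖ ^ s ∂volume := by
    apply integral_nonneg
    intro x
    positivity
  have hH4 : (∫ x in B, ‖f x‖ ^ s ∂volume) ^ (1/s) = (eLpNorm f (ENNReal.ofReal s) μB).toReal := by
    rw [hfs.eLpNorm_eq_integral_rpow_norm (by simp [ENNReal.ofReal_eq_zero]; linarith)
      ENNReal.ofReal_ne_top]
    rw [ENNReal.toReal_ofReal hs0.le]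
    rw [ENNReal.toReal_ofReal (by positivity)]
    rw [one_div]
  -- interpolation
  have hH5 : eLpNorm f (ENNReal.ofReal s) μB ≤
      eLpNorm f (ENNReal.ofReal q) μB * (μB univ) ^ θ := by
    have h := eLpNorm_le_eLpNorm_mul_rpow_measure_univ (μ := μB)
      (ENNReal.ofReal_le_ofReal hsq) hf.1
    rwa [ENNReal.toReal_ofReal hs0.le, ENNReal.toReal_ofReal hq0.le] at h
  have hμuniv : μB univ = ENNReal.ofReal (r ^ n) * Vtop := by
    rw [hμB, Measure.restrict_apply_univ, hBdef, hVdef]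
    rw [Measure.addHaar_ball (volume : Measure (En n)) x₀ hr.le, hfrank]
  have hfq_fin : eLpNorm f (ENNReal.ofReal q) μB ≠ ⊤ := by
    rw [hμB]; exact hf.eLpNorm_ne_top
  have hVfin : Vtop ≠ ⊤ := by rw [hVdef]; exact measure_ball_lt_top.ne
  -- pass to real numbers
  have hrexp : ((r:ℝ) ^ (n:ℕ)) ^ θ = r ^ ((n:ℝ)/2 + 1 - (n:ℝ)/q) := by
    rw [← Real.rpow_natCast r n, ← Real.rpow_mul hr.le]
    congr 1
    rw [hθdef, hsdef]
    field_simp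
  have hH5' : (eLpNorm f (ENNReal.ofReal s) μB).toReal ≤
      (eLpNorm f (ENNReal.ofReal q) μB).toReal * (r ^ ((n:ℝ)/2 + 1 - (n:ℝ)/q) * Vθ) := by
    have hRHSfin : eLpNorm f (ENNReal.ofReal q) μB * (μB univ) ^ θ ≠ ⊤ := by
      apply ENNReal.mul_ne_top hfq_fin
      apply ENNReal.rpow_ne_top_of_nonneg hθ0.le
      rw [hμuniv]
      exact ENNReal.mul_ne_top ENNReal.ofReal_ne_top hVfin
    have h1 := ENNReal.toReal_mono hRHSfin hH5
    rw [ENNReal.toReal_mul] at h1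
    refine h1.trans (le_of_eq ?_)
    congr 1
    rw [hμuniv, ENNReal.mul_rpow_of_nonneg _ _ hθ0.le, ENNReal.toReal_mul]
    rw [← ENNReal.toReal_rpow, ← ENNReal.toReal_rpow]
    rw [ENNReal.toReal_ofReal (by positivity)]
    rw [hrexp, hVθdef]
  -- φ factor to real
  have hchain' : (eLpNorm φ (ENNReal.ofReal P) μB).toReal ≤
      (csob:ℝ) * (eLpNorm (gradient φ) 2 μB).toReal := by
    have hRHSfin : (csob : ℝ≥0∞) * eLpNorm (gradient φ) 2 μB ≠ ⊤ :=
      ENNReal.mul_ne_top ENNReal.coe_ne_top hgradfin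
    have h1 := ENNReal.toReal_mono hRHSfin hchain
    rwa [ENNReal.toReal_mul, ENNReal.coe_toReal] at h1
  -- final assembly
  set Fq : ℝ := (eLpNorm f (ENNReal.ofReal q) μB).toReal * r ^ ((n:ℝ)/2 + 1 - (n:ℝ)/q) with hFq
  set Gr : ℝ := (eLpNorm (gradient φ) 2 μB).toReal with hGr
  have hFq0 : 0 ≤ Fq := by rw [hFq]; positivity
  have hGr0 : 0 ≤ Gr := by rw [hGr]; positivity
  calc ∫ x in B, f x * φ x
      ≤ (∫ x in B, ‖f x‖ ^ s ∂volume) ^ (1/s) * (∫ x in B, ‖φ x‖ ^ P ∂volume) ^ (1/P) := hH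
    _ = (eLpNorm f (ENNReal.ofReal s) μB).toReal * (eLpNorm φ (ENNReal.ofReal P) μB).toReal := by
        rw [hH3, hH4]
    _ ≤ ((eLpNorm f (ENNReal.ofReal q) μB).toReal * (r ^ ((n:ℝ)/2 + 1 - (n:ℝ)/q) * Vθ)) *
        ((csob:ℝ) * Gr) := by
        apply mul_le_mul hH5' hchain' (by positivity) ?_
        have h0 : 0 ≤ (eLpNorm f (ENNReal.ofReal q) μB).toReal := ENNReal.toReal_nonneg
        positivity
    _ = (Vθ * (csob:ℝ)) * (Fq * Gr) := by rw [hFq]; ring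
    _ ≤ (((csob:ℝ) + 1) * (Vθ + 1)) * (Fq * Gr) := by
        apply mul_le_mul_of_nonneg_right ?_ (by positivity)
        nlinarith [csob.coe_nonneg]
    _ = ((csob:ℝ) + 1) * (Vθ + 1) * Fq * Gr := by ring

/-- `a` satisfies the structure conditions with exponent `p` on `Ω`. -/
def StructureConditions (n : ℕ) (p lam Lam tLam : ℝ) (ω : ℝ → ℝ)
    (Ω : Set (En n)) (a : En n → En n → En n)
    (Da : En n → En n → (En n →L[ℝ] En n)) : Prop :=
  ContinuousOn (fun z : En n × En n => a z.1 z.2) (Ω ×ˢ univ) ∧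
  (∀ x ∈ Ω, ∀ ξ : En n, HasFDerivAt (a x) (Da x ξ) ξ) ∧
  (∀ x ∈ Ω, ∀ ξ : En n, ‖a x ξ‖ + ‖Da x ξ‖ * ‖ξ‖ ≤ Lam * ‖ξ‖ ^ (p - 1)) ∧
  (∀ x ∈ Ω, ∀ ξ₁ ξ₂ : En n, lam * ‖ξ₁‖ ^ (p - 2) * ‖ξ₂‖ ^ (2 : ℝ) ≤ ⟪Da x ξ₁ ξ₂, ξ₂⟫) ∧
  (∀ x₁ ∈ Ω, ∀ x₂ ∈ Ω, ∀ ξ : En n, ‖a x₁ ξ - a x₂ ξ‖ ≤ tLam * ω ‖x₁ - x₂‖ * ‖ξ‖ ^ (p - 1))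

/-- `ω` is a modulus of continuity, Hölder continuous with exponent `σ₀` and norm `M`. -/
def IsModulus (σ₀ M : ℝ) (ω : ℝ → ℝ) : Prop :=
  ω 0 = 0 ∧ (∀ t, 0 ≤ ω t) ∧ ∀ s t, |ω s - ω t| ≤ M * |s - t| ^ σ₀

/-- `u` is a weak solution of `-div a(x,∇u) = f` in `Ω`. -/
def IsWeakSolution (n : ℕ) (Ω : Set (En n)) (a : En n → En n → En n)
    (f u : En n → ℝ) : Prop :=
  ∀ φ : En n → ℝ, ContDiff ℝ (⊤ : ℕ∞) φ → HasCompactSupport φ → tsupport φ ⊆ Ω →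
    ∫ x in Ω, ⟪a x (gradient u x), gradient φ x⟫ = ∫ x in Ω, f x * φ x

/-- The exponent `α_{p,q}`. -/
def alphapq (n : ℕ) (p σ₀ : ℝ) (q : ℝ≥0∞) : ℝ :=
  (if q = ∞ then σ₀ else min σ₀ (1 - n / q.toReal)) * min 1 (1 / (p - 1))

/-- `αM` has the optimal-regularity property for constant coefficient equations. -/
def HasOptimalRegularity (n : ℕ) (p lam Lam αM : ℝ) : Prop :=
  ∀ β : ℝ, 0 < β → β < αM → ∃ C > 0,
    ∀ (a₀ : En n → En n) (Da₀ : En n → (En n →L[ℝ] En n)),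
      (∀ ξ : En n, HasFDerivAt a₀ (Da₀ ξ) ξ) →
      (∀ ξ : En n, ‖a₀ ξ‖ + ‖Da₀ ξ‖ * ‖ξ‖ ≤ Lam * ‖ξ‖ ^ (p - 1)) →
      (∀ ξ₁ ξ₂ : En n, lam * ‖ξ₁‖ ^ (p - 2) * ‖ξ₂‖ ^ (2 : ℝ) ≤ ⟪Da₀ ξ₁ ξ₂, ξ₂⟫) →
      ∀ h : En n → ℝ, ContDiffOn ℝ 1 h (ball 0 1) →
        IsWeakSolution n (ball 0 1) (fun _ ξ => a₀ ξ) (fun _ => 0) h →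
        ∀ S : ℝ, (∀ z ∈ ball (0 : En n) 1, |h z| ≤ S) →
          ∀ x ∈ ball (0 : En n) (1 / 2), ∀ y ∈ ball (0 : En n) (1 / 2),
            ‖gradient h x - gradient h y‖ ≤ C * S * ‖x - y‖ ^ β

theorem statement17
    (n : ℕ) (hn : 3 ≤ n) (q lam Lam tLam : ℝ) (hq : (n : ℝ) < q)
    (hlam : 0 < lam) (hLam : lam ≤ Lam) (htLam : 1 ≤ tLam) :
    ∃ C > 0,
      ∀ (r : ℝ), 0 < r → ∀ (x₀ : En n) (a : En n → En n → En n)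
        (Da : En n → En n → (En n →L[ℝ] En n)) (ω : ℝ → ℝ) (f u h : En n → ℝ),
        ω 0 = 0 → (∀ t : ℝ, 0 ≤ ω t) →
        StructureConditions n 2 lam Lam tLam ω (ball x₀ r) a Da →
        MemLp f (ENNReal.ofReal q) (volume.restrict (ball x₀ r)) →
        ContDiffOn ℝ 1 u (ball x₀ r) →
        IsWeakSolution n (ball x₀ r) a f u →
        ContDiffOn ℝ 1 h (ball x₀ r) →
        IsWeakSolution n (ball x₀ r) (fun _ ξ => a x₀ ξ) (fun _ => 0) h →
        IntegrableOn (fun x => ‖gradient u x‖ ^ 2) (ball x₀ r) volume →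
        IntegrableOn (fun x => ‖gradient h x‖ ^ 2) (ball x₀ r) volume →
        (∃ φ : ℕ → En n → ℝ,
          (∀ k, ContDiff ℝ (⊤ : ℕ∞) (φ k) ∧ HasCompactSupport (φ k) ∧
            tsupport (φ k) ⊆ ball x₀ r) ∧
          Filter.Tendsto
            (fun k => ∫ x in ball x₀ r, |φ k x - (u x - h x)| ^ 2)
            Filter.atTop (nhds 0) ∧
          Filter.Tendsto
            (fun k => ∫ x in ball x₀ r,
              ‖gradient (φ k) x - (gradient u x - gradient h x)‖ ^ 2)
            Filter.atTop (nhds 0)) →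
        ∫ x in ball x₀ r, ‖gradient u x - gradient h x‖ ^ 2 ≤
          C * (ω r ^ 2 * (∫ x in ball x₀ r, ‖gradient u x‖ ^ 2) +
            (∫ x in ball x₀ r, |f x| ^ q) ^ (2 / q) *
              r ^ ((n : ℝ) + 2 * (1 - (n : ℝ) / q))) := by
  obtain ⟨c₀, hc₀, hpoin⟩ := poincare hn hq
  set C : ℝ := (8 * tLam ^ 2 + 2 * c₀ ^ 2) / lam ^ 2 + 1 with hCdef
  have hC : 0 < C := by positivity
  refine ⟨C, hC, ?_⟩
  intro r hr x₀ a Da ω f u h hω0 hω hSC hf hu hWu hh hWh hintu hinth hadm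
  obtain ⟨hcont, hderiv, hgrowth, hmono, hosc⟩ := hSC
  obtain ⟨φs, hφs, _, htend2⟩ := hadm
  have hq0 : 0 < q := lt_trans (by exact_mod_cast (by omega : 0 < n)) hq
  set B : Set (En n) := ball x₀ r with hBdef
  set μB := volume.restrict B with hμBdef
  have hx₀ : x₀ ∈ B := mem_ball_self hr
  -- continuity and L² facts for gradients
  have hguC : ContinuousOn (gradient u) B := by
    have h1 : ContinuousOn (fderiv ℝ u) B := hu.continuousOn_fderiv_of_isOpen isOpen_ball le_rfl
    exact (InnerProductSpace.toDual ℝ (En n)).symm.continuous.comp_continuousOn h1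
  have hghC : ContinuousOn (gradient h) B := by
    have h1 : ContinuousOn (fderiv ℝ h) B := hh.continuousOn_fderiv_of_isOpen isOpen_ball le_rfl
    exact (InnerProductSpace.toDual ℝ (En n)).symm.continuous.comp_continuousOn h1
  have hguM : AEStronglyMeasurable (gradient u) μB :=
    hguC.aestronglyMeasurable measurableSet_ball
  have hghM : AEStronglyMeasurable (gradient h) μB :=
    hghC.aestronglyMeasurable measurableSet_ball
  have hguL2 : MemLp (gradient u) 2 μB :=
    (memLp_two_iff_integrable_sq_norm hguM).mpr hintu
  have hghL2 : MemLp (gradient h) 2 μB :=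
    (memLp_two_iff_integrable_sq_norm hghM).mpr hinth
  set gv : En n → En n := fun x => gradient u x - gradient h x with hgvdef
  have hgvL2 : MemLp gv 2 μB := hguL2.sub hghL2
  have hgvInt : Integrable (fun x => ‖gv x‖ ^ 2) μB :=
    (memLp_two_iff_integrable_sq_norm hgvL2.1).mp hgvL2
  set T : ℝ := ∫ x in B, ‖gv x‖ ^ 2 with hTdef
  set U2 : ℝ := ∫ x in B, ‖gradient u x‖ ^ 2 with hU2def
  have hT0 : 0 ≤ T := by
    rw [hTdef]; apply integral_nonneg; intro x; positivity
  have hU20 : 0 ≤ U2 := by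
    rw [hU2def]; apply integral_nonneg; intro x; positivity
  -- vector fields
  set Au : En n → En n := fun x => a x (gradient u x) with hAudef
  set A0u : En n → En n := fun x => a x₀ (gradient u x) with hA0udef
  set A0h : En n → En n := fun x => a x₀ (gradient h x) with hA0hdef
  have hA0cont : Continuous (fun ξ : En n => a x₀ ξ) := by
    rw [continuous_iff_continuousAt]
    exact fun ξ => (hderiv x₀ hx₀ ξ).differentiableAt.continuousAt
  have hgrowth' : ∀ x ∈ B, ∀ ξ : En n, ‖a x ξ‖ ≤ Lam * ‖ξ‖ := by
    intro x hx ξ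
    have h1 := hgrowth x hx ξ
    rw [show (2:ℝ) - 1 = 1 by norm_num, Real.rpow_one] at h1
    linarith [mul_nonneg (norm_nonneg (Da x ξ)) (norm_nonneg ξ)]
  have hLam0 : 0 < Lam := lt_of_lt_of_le hlam hLam
  -- MemLp for the vector fields
  have memVF : ∀ (w : En n → En n), ContinuousOn w B → MemLp w 2 μB →
      MemLp (fun x => a x₀ (w x)) 2 μB ∧ MemLp (fun x => a x (w x)) 2 μB := by
    intro w hwC hwL2
    have hwInt : Integrable (fun x => ‖w x‖ ^ 2) μB :=
      (memLp_two_iff_integrable_sq_norm hwL2.1).mp hwL2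
    have hbnd : Integrable (fun x => Lam ^ 2 * ‖w x‖ ^ 2) μB := hwInt.const_mul _
    constructor
    · have hC1 : ContinuousOn (fun x => a x₀ (w x)) B := hA0cont.comp_continuousOn hwC
      have hM1 : AEStronglyMeasurable (fun x => a x₀ (w x)) μB :=
        hC1.aestronglyMeasurable measurableSet_ball
      refine (memLp_two_iff_integrable_sq_norm hM1).mpr ?_
      refine hbnd.mono' ((hC1.norm.pow 2).aestronglyMeasurable measurableSet_ball) ?_
      filter_upwards [ae_restrict_mem measurableSet_ball] with x hx
      have hb := hgrowth' x₀ hx₀ (w x)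
      rw [Real.norm_eq_abs, abs_of_nonneg (by positivity)]
      calc ‖a x₀ (w x)‖ ^ 2 ≤ (Lam * ‖w x‖) ^ 2 := by
            apply pow_le_pow_left₀ (norm_nonneg _) hb
        _ = Lam ^ 2 * ‖w x‖ ^ 2 := by rw [mul_pow]
    · have hC1 : ContinuousOn (fun x => a x (w x)) B := by
        apply hcont.comp (continuousOn_id.prodMk hwC)
        intro x hx
        exact ⟨hx, mem_univ _⟩
      have hM1 : AEStronglyMeasurable (fun x => a x (w x)) μB :=
        hC1.aestronglyMeasurable measurableSet_ball
      refine (memLp_two_iff_integrable_sq_norm hM1).mpr ?_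
      refine hbnd.mono' ((hC1.norm.pow 2).aestronglyMeasurable measurableSet_ball) ?_
      filter_upwards [ae_restrict_mem measurableSet_ball] with x hx
      have hb := hgrowth' x hx (w x)
      rw [Real.norm_eq_abs, abs_of_nonneg (by positivity)]
      calc ‖a x (w x)‖ ^ 2 ≤ (Lam * ‖w x‖) ^ 2 := by
            apply pow_le_pow_left₀ (norm_nonneg _) hb
        _ = Lam ^ 2 * ‖w x‖ ^ 2 := by rw [mul_pow]
  obtain ⟨hA0uL2, hAuL2⟩ := memVF (gradient u) hguC hguL2
  obtain ⟨hA0hL2, _⟩ := memVF (gradient h) hghC hghL2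
  set G : En n → En n := fun x => Au x - A0h x with hGdef
  have hGL2 : MemLp G 2 μB := hAuL2.sub hA0hL2
  -- facts about gradients of test functions
  have gradφfacts : ∀ k, Continuous (gradient (φs k)) ∧ MemLp (gradient (φs k)) 2 μB := by
    intro k
    obtain ⟨hφ, hφc, hφsupp⟩ := hφs k
    have h1 : Continuous (fderiv ℝ (φs k)) := (hφ.fderiv_right (m := (⊤ : ℕ∞)) le_rfl).continuous
    have hgc : Continuous (gradient (φs k)) :=
      (InnerProductSpace.toDual ℝ (En n)).symm.continuous.comp h1
    have hHCS : HasCompactSupport (gradient (φs k)) := by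
      have h2 : HasCompactSupport (fderiv ℝ (φs k)) := HasCompactSupport.fderiv (𝕜 := ℝ) hφc
      apply HasCompactSupport.comp_left h2
      simp
    exact ⟨hgc, (hgc.memLp_of_hasCompactSupport (p := 2) hHCS).restrict B⟩
  -- weak formulation combined
  have hSG : ∀ k, ∫ x in B, ⟪G x, gradient (φs k) x⟫ = ∫ x in B, f x * φs k x := by
    intro k
    obtain ⟨hφ, hφc, hφsupp⟩ := hφs k
    have hWU := hWu (φs k) hφ hφc hφsupp
    have hWH := hWh (φs k) hφ hφc hφsupp
    simp only [zero_mul, integral_zero] at hWH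
    have hgφ := (gradφfacts k).2
    have e1 : ∫ x in B, ⟪G x, gradient (φs k) x⟫ =
        (∫ x in B, ⟪Au x, gradient (φs k) x⟫) - ∫ x in B, ⟪A0h x, gradient (φs k) x⟫ := by
      rw [← integral_sub (l2_integrable_inner hAuL2 hgφ) (l2_integrable_inner hA0hL2 hgφ)]
      apply integral_congr_ae
      filter_upwards with x
      rw [hGdef, inner_sub_left]
    rw [e1, hWU, hWH, sub_zero]
  -- limits
  have hgφsubL2 : ∀ k, MemLp (fun x => gradient (φs k) x - gv x) 2 μB :=
    fun k => ((gradφfacts k).2).sub hgvL2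
  set ρ : ℕ → ℝ := fun k => (∫ x in B, ‖gradient (φs k) x - gv x‖ ^ 2) ^ (1/2:ℝ) with hρdef
  have hρ0 : ∀ k, 0 ≤ ρ k := by
    intro k
    exact Real.rpow_nonneg (integral_nonneg (fun x => by positivity)) _
  have hρlim : Tendsto ρ atTop (𝓝 0) := by
    have h1 : Tendsto (fun k => ∫ x in B, ‖gradient (φs k) x - gv x‖ ^ 2) atTop (𝓝 0) := htend2
    have h2 := h1.rpow_const (p := 1/2) (Or.inr (by norm_num))
    rwa [Real.zero_rpow (by norm_num)] at h2
  set L : ℝ := ∫ x in B, ⟪G x, gv x⟫ with hLdef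
  set NG : ℝ := (∫ x in B, ‖G x‖ ^ 2) ^ (1/2:ℝ) with hNGdef
  have hNG0 : 0 ≤ NG :=
    Real.rpow_nonneg (integral_nonneg (fun x => by positivity)) _
  have hSGlim : Tendsto (fun k => ∫ x in B, ⟪G x, gradient (φs k) x⟫) atTop (𝓝 L) := by
    have hbound : ∀ k, ‖(∫ x in B, ⟪G x, gradient (φs k) x⟫) - L‖ ≤ NG * ρ k := by
      intro k
      have hi1 : Integrable (fun x => ⟪G x, gradient (φs k) x⟫) μB :=
        l2_integrable_inner hGL2 (gradφfacts k).2
      have hi2 : Integrable (fun x => ⟪G x, gv x⟫) μB :=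
        l2_integrable_inner hGL2 hgvL2
      have e1 : (∫ x in B, ⟪G x, gradient (φs k) x⟫) - L =
          ∫ x in B, ⟪G x, gradient (φs k) x - gv x⟫ := by
        rw [hLdef, ← integral_sub hi1 hi2]
        apply integral_congr_ae
        filter_upwards with x
        simp only [hgvdef, inner_sub_right]
      rw [e1, Real.norm_eq_abs]
      exact l2_CS_inner hGL2 (hgφsubL2 k)
    have h0 : Tendsto (fun k => NG * ρ k) atTop (𝓝 0) := by
      have h0' := hρlim.const_mul NG
      rwa [mul_zero] at h0'
    have h1 : Tendsto (fun k => (∫ x in B, ⟪G x, gradient (φs k) x⟫) - L) atTop (𝓝 0) :=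
      squeeze_zero_norm hbound h0
    simpa using h1.add_const L
  -- Poincaré bound on the limit
  set Fqr : ℝ := (eLpNorm f (ENNReal.ofReal q) μB).toReal * r ^ ((n:ℝ)/2 + 1 - (n:ℝ)/q)
    with hFqrdef
  have hFqr0 : 0 ≤ Fqr :=
    mul_nonneg ENNReal.toReal_nonneg (Real.rpow_nonneg hr.le _)
  set A : ℝ := T ^ (1/2:ℝ) with hAdef
  have hA0 : 0 ≤ A := Real.rpow_nonneg hT0 _
  have hAgv : (eLpNorm gv 2 μB).toReal = A := by
    rw [l2norm_toReal hgvL2, hAdef, hTdef]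
  have hLle : L ≤ c₀ * Fqr * A := by
    have hb : ∀ k, ∫ x in B, ⟪G x, gradient (φs k) x⟫ ≤ c₀ * Fqr * (ρ k + A) := by
      intro k
      obtain ⟨hφ, hφc, hφsupp⟩ := hφs k
      rw [hSG k]
      have hP := hpoin r hr x₀ f (φs k) hf hφ hφc hφsupp
      refine hP.trans ?_
      rw [show c₀ * ((eLpNorm f (ENNReal.ofReal q) μB).toReal * r ^ ((n:ℝ)/2 + 1 - (n:ℝ)/q))
        = c₀ * Fqr by rw [hFqrdef]]
      apply mul_le_mul_of_nonneg_left ?_ (mul_nonneg hc₀.le hFqr0)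
      -- triangle inequality for eLpNorm
      have htri : eLpNorm (gradient (φs k)) 2 μB ≤
          eLpNorm (fun x => gradient (φs k) x - gv x) 2 μB + eLpNorm gv 2 μB := by
        have heq : gradient (φs k) = (fun x => (gradient (φs k) x - gv x) + gv x) := by
          funext x; abel
        calc eLpNorm (gradient (φs k)) 2 μB
            = eLpNorm (fun x => (gradient (φs k) x - gv x) + gv x) 2 μB := by rw [← heq]
          _ ≤ _ := eLpNorm_add_le (hgφsubL2 k).1 hgvL2.1 one_le_two
      have hfin : eLpNorm (fun x => gradient (φs k) x - gv x) 2 μB + eLpNorm gv 2 μB ≠ ⊤ :=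
        ENNReal.add_ne_top.mpr ⟨(hgφsubL2 k).eLpNorm_ne_top, hgvL2.eLpNorm_ne_top⟩
      have h1 := ENNReal.toReal_mono hfin htri
      rw [ENNReal.toReal_add (hgφsubL2 k).eLpNorm_ne_top hgvL2.eLpNorm_ne_top] at h1
      rw [l2norm_toReal (hgφsubL2 k), hAgv] at h1
      exact h1
    have hRHS : Tendsto (fun k => c₀ * Fqr * (ρ k + A)) atTop (𝓝 (c₀ * Fqr * A)) := by
      have h0' := (hρlim.add_const A).const_mul (c₀ * Fqr)
      rwa [zero_add] at h0'
    exact le_of_tendsto_of_tendsto' hSGlim hRHS hb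
  -- monotonicity step
  have hmonoq := mono_step (fun ξ => hderiv x₀ hx₀ ξ) (fun ξ₁ ξ₂ => hmono x₀ hx₀ ξ₁ ξ₂)
  have hi3 : Integrable (fun x => ⟪A0u x - A0h x, gv x⟫) μB :=
    l2_integrable_inner (hA0uL2.sub hA0hL2) hgvL2
  have hstep1 : lam * T ≤ ∫ x in B, ⟪A0u x - A0h x, gv x⟫ := by
    rw [hTdef, ← integral_const_mul]
    apply setIntegral_mono_on (hgvInt.const_mul lam) hi3 measurableSet_ball
    intro x hx
    exact hmonoq (gradient u x) (gradient h x)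
  -- splitting
  have hi4 : Integrable (fun x => ⟪A0u x - Au x, gv x⟫) μB :=
    l2_integrable_inner (hA0uL2.sub hAuL2) hgvL2
  have hi5 : Integrable (fun x => ⟪G x, gv x⟫) μB :=
    l2_integrable_inner hGL2 hgvL2
  have hsplit : ∫ x in B, ⟪A0u x - A0h x, gv x⟫ =
      (∫ x in B, ⟪A0u x - Au x, gv x⟫) + ∫ x in B, ⟪G x, gv x⟫ := by
    rw [← integral_add hi4 hi5]
    apply integral_congr_ae
    filter_upwards with x
    rw [hGdef, ← inner_add_left]
    congr 1
    simp [hGdef]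
  -- freezing estimate
  have hfreeze := freezing (by omega : 2 ≤ n) hr (by linarith : (0:ℝ) ≤ tLam) hω hcont hosc
  set K1 : ℝ := 2 * (tLam * ω r) with hK1def
  have hK10 : 0 ≤ K1 := by
    rw [hK1def]
    exact mul_nonneg (by norm_num) (mul_nonneg (by linarith) (hω r))
  set U : ℝ := U2 ^ (1/2:ℝ) with hUdef
  have hU0 : 0 ≤ U := Real.rpow_nonneg hU20 _
  have hstep2 : ∫ x in B, ⟪A0u x - Au x, gv x⟫ ≤ K1 * (U * A) := by
    have ha : ∫ x in B, ⟪A0u x - Au x, gv x⟫ ≤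
        ∫ x in B, K1 * (‖gradient u x‖ * ‖gv x‖) := by
      apply setIntegral_mono_on hi4
        ((l2_integrable_norm_mul_norm hguL2 hgvL2).const_mul K1) measurableSet_ball
      intro x hx
      calc ⟪A0u x - Au x, gv x⟫ ≤ ‖A0u x - Au x‖ * ‖gv x‖ := real_inner_le_norm _ _
        _ ≤ (K1 * ‖gradient u x‖) * ‖gv x‖ := by
            apply mul_le_mul_of_nonneg_right ?_ (norm_nonneg _)
            rw [hA0udef, hAudef]
            rw [norm_sub_rev]
            exact hfreeze x hx (gradient u x)
        _ = K1 * (‖gradient u x‖ * ‖gv x‖) := by ring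
    refine ha.trans ?_
    rw [integral_const_mul]
    apply mul_le_mul_of_nonneg_left ?_ hK10
    have := l2_CS_norm hguL2 hgvL2
    rw [hUdef, hAdef, hTdef, hU2def]
    exact this
  -- combine
  have hmain : lam * T ≤ (K1 * U + c₀ * Fqr) * A := by
    calc lam * T ≤ ∫ x in B, ⟪A0u x - A0h x, gv x⟫ := hstep1
      _ = (∫ x in B, ⟪A0u x - Au x, gv x⟫) + L := by rw [hsplit, hLdef]
      _ ≤ K1 * (U * A) + c₀ * Fqr * A := add_le_add hstep2 hLle
      _ = (K1 * U + c₀ * Fqr) * A := by ring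
  -- final algebra
  have hA2 : A ^ 2 = T := by
    rw [hAdef, ← Real.rpow_natCast (T ^ (1/2:ℝ)) 2, ← Real.rpow_mul hT0]
    norm_num
  have hU2 : U ^ 2 = U2 := by
    rw [hUdef, ← Real.rpow_natCast (U2 ^ (1/2:ℝ)) 2, ← Real.rpow_mul hU20]
    norm_num
  -- identify the f-term
  set Q : ℝ := (∫ x in B, |f x| ^ q) ^ (2/q) with hQdef
  set R : ℝ := r ^ ((n:ℝ) + 2 * (1 - (n:ℝ)/q)) with hRdef
  have hQ0 : 0 ≤ Q := by
    rw [hQdef]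
    apply Real.rpow_nonneg
    apply integral_nonneg
    intro x
    positivity
  have hR0 : 0 ≤ R := Real.rpow_nonneg hr.le _
  have hFqrsq : Fqr ^ 2 = Q * R := by
    rw [hFqrdef, hQdef, hRdef]
    have hfint : ∫ x in B, |f x| ^ q = ∫ x in B, ‖f x‖ ^ q := by
      apply integral_congr_ae
      filter_upwards with x
      rw [Real.norm_eq_abs]
    have he1 : (eLpNorm f (ENNReal.ofReal q) μB).toReal =
        (∫ x in B, ‖f x‖ ^ q) ^ q⁻¹ := by
      rw [hf.eLpNorm_eq_integral_rpow_norm (by simp [ENNReal.ofReal_eq_zero]; linarith)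
        ENNReal.ofReal_ne_top]
      rw [ENNReal.toReal_ofReal hq0.le]
      rw [ENNReal.toReal_ofReal (by positivity)]
    have hint0 : 0 ≤ ∫ x in B, ‖f x‖ ^ q := by
      apply integral_nonneg; intro x; positivity
    rw [he1, hfint, mul_pow]
    congr 1
    · rw [← Real.rpow_natCast ((∫ x in B, ‖f x‖ ^ q) ^ q⁻¹) 2, ← Real.rpow_mul hint0]
      congr 1
      push_cast
      field_simp
    · rw [← Real.rpow_natCast (r ^ ((n:ℝ)/2 + 1 - (n:ℝ)/q)) 2, ← Real.rpow_mul hr.le]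
      congr 1
      ring
  -- conclude
  have hgoal : T ≤ C * (ω r ^ 2 * U2 + Q * R) := by
    rcases eq_or_lt_of_le hA0 with hAz | hAp
    · have hTz : T = 0 := by rw [← hA2, ← hAz]; ring
      rw [hTz]
      exact mul_nonneg hC.le (add_nonneg (mul_nonneg (by positivity) hU20)
        (mul_nonneg hQ0 hR0))
    · have hlA : lam * A ≤ K1 * U + c₀ * Fqr := by
        have h1 : lam * A * A ≤ (K1 * U + c₀ * Fqr) * A := by
          calc lam * A * A = lam * T := by rw [← hA2]; ring
            _ ≤ (K1 * U + c₀ * Fqr) * A := hmain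
        exact le_of_mul_le_mul_right h1 hAp
      have hsum0 : 0 ≤ K1 * U + c₀ * Fqr :=
        add_nonneg (mul_nonneg hK10 hU0) (mul_nonneg hc₀.le hFqr0)
      have hsq : (lam * A) ^ 2 ≤ 2 * (K1 * U) ^ 2 + 2 * (c₀ * Fqr) ^ 2 := by
        have h2 : (lam * A) ^ 2 ≤ (K1 * U + c₀ * Fqr) ^ 2 := by
          apply sq_le_sq' ?_ hlA
          have h3 : 0 ≤ lam * A := mul_nonneg hlam.le hA0
          linarith
        have h4 : (K1 * U + c₀ * Fqr) ^ 2 ≤ 2 * (K1 * U) ^ 2 + 2 * (c₀ * Fqr) ^ 2 := by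
          have h5 := sq_nonneg (K1 * U - c₀ * Fqr)
          have e : (K1 * U + c₀ * Fqr) ^ 2
              = 2 * (K1 * U) ^ 2 + 2 * (c₀ * Fqr) ^ 2 - (K1 * U - c₀ * Fqr) ^ 2 := by ring
          linarith
        linarith
      have hT' : lam ^ 2 * T ≤ 2 * K1 ^ 2 * U2 + 2 * c₀ ^ 2 * (Q * R) := by
        calc lam ^ 2 * T = (lam * A) ^ 2 := by rw [← hA2]; ring
          _ ≤ 2 * (K1 * U) ^ 2 + 2 * (c₀ * Fqr) ^ 2 := hsq
          _ = 2 * K1 ^ 2 * U ^ 2 + 2 * c₀ ^ 2 * Fqr ^ 2 := by ring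
          _ = 2 * K1 ^ 2 * U2 + 2 * c₀ ^ 2 * (Q * R) := by rw [hU2, hFqrsq]
      have hK1sq : K1 ^ 2 = 4 * (tLam ^ 2 * ω r ^ 2) := by
        rw [hK1def]; ring
      have hT'' : lam ^ 2 * T ≤ 8 * tLam ^ 2 * (ω r ^ 2 * U2) + 2 * c₀ ^ 2 * (Q * R) := by
        refine hT'.trans ?_
        have he : 2 * K1 ^ 2 * U2 = 8 * tLam ^ 2 * (ω r ^ 2 * U2) := by
          rw [hK1sq]; ring
        linarith
      have hco1 : 8 * tLam ^ 2 / lam ^ 2 ≤ C := by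
        rw [hCdef]
        have : (0:ℝ) ≤ 2 * c₀ ^ 2 / lam ^ 2 := by positivity
        rw [add_div]
        linarith
      have hco2 : 2 * c₀ ^ 2 / lam ^ 2 ≤ C := by
        rw [hCdef]
        have : (0:ℝ) ≤ 8 * tLam ^ 2 / lam ^ 2 := by positivity
        rw [add_div]
        linarith
      have hωU0 : 0 ≤ ω r ^ 2 * U2 := mul_nonneg (by positivity) hU20
      have hQR0 : 0 ≤ Q * R := mul_nonneg hQ0 hR0
      calc T = (lam ^ 2 * T) / lam ^ 2 := by field_simp
        _ ≤ (8 * tLam ^ 2 * (ω r ^ 2 * U2) + 2 * c₀ ^ 2 * (Q * R)) / lam ^ 2 := by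
            apply div_le_div_of_nonneg_right hT'' (by positivity) |>.trans_eq rfl
        _ = (8 * tLam ^ 2 / lam ^ 2) * (ω r ^ 2 * U2) + (2 * c₀ ^ 2 / lam ^ 2) * (Q * R) := by
            ring
        _ ≤ C * (ω r ^ 2 * U2) + C * (Q * R) :=
            add_le_add (mul_le_mul_of_nonneg_right hco1 hωU0)
              (mul_le_mul_of_nonneg_right hco2 hQR0)
        _ = C * (ω r ^ 2 * U2 + Q * R) := by ring
  exact hgoal
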